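/- For integers N_1, …, N_k ≥ 2, the identity Σ_{j=1}^k Σ_{i=1}^{φ(N_j)} (ψ(1) − ψ(r_{i,j}/N_j)) = log(C_N) holds, where ψ is the digamma function, the r_{i,j} run over integers in {1,…,N_j} coprime to N_j, and C_N = ∏_{j=1}^k N_j^{φ(N_j)} ∏_{p | N_j} p^{φ(N_j)/(p−1)}. -/

import Mathlib

/-!
Write `G(N) = ∑_{r ≤ N, (r, N) = 1} (ψ(1) - ψ(r / N))`. Sorting the fractions `r / N`, `1 ≤ r ≤ N`,
by their reduced denominators gives `∑_{d ∣ N} G(d) = ∑_{r=1}^N (ψ(1) - ψ(r / N))`, and this equals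
`N log N` because `ψ(1) - ψ(x) = lim_n (∑_{m<n} 1 / (x + m) - H_n)` while `H_{nN} - H_n → log N`.
Möbius inversion then gives `G(N) = ∑_{d ∣ N} μ(d) (N / d) log (N / d)`, which is evaluated with
`∑_{d ∣ N} μ(d) / d = φ(N) / N` and `∑_{d ∣ N, p ∣ d} μ(d) / d = -(φ(N) / N) / (p - 1)`.
-/

/-- The digamma function `ψ = (log ∘ Γ)'`. -/
noncomputable def digamma (x : ℝ) : ℝ := deriv (fun y => Real.log (Real.Gamma y)) x

/-- The constant `C_N = N^{φ(N)} ∏_{p ∣ N} p^{φ(N)/(p-1)}`. -/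
def paperC (N : ℕ) : ℕ := N ^ N.totient * ∏ p ∈ N.primeFactors, p ^ (N.totient / (p - 1))

/-- The totatives of `N` in `{1,…,N}`. -/
def totSet (N : ℕ) : Finset ℕ := (Finset.Icc 1 N).filter (fun r => Nat.Coprime r N)

open Real Finset Filter Topology
open scoped ArithmeticFunction.Moebius

lemma differentiableAt_log_Gamma {x : ℝ} (hx : 0 < x) :
    DifferentiableAt ℝ (fun y => log (Gamma y)) x :=
  (differentiableAt_Gamma fun m => by linarith [m.cast_nonneg (α := ℝ)]).log
    (Gamma_pos_of_pos hx).ne'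

lemma digamma_add_one {x : ℝ} (hx : 0 < x) : digamma (x + 1) = digamma x + x⁻¹ := by
  rw [digamma, digamma, ← deriv_comp_add_const, ← Real.deriv_log,
    ← deriv_add (differentiableAt_log_Gamma hx) (differentiableAt_log hx.ne')]
  refine EventuallyEq.deriv_eq ?_
  filter_upwards [eventually_gt_nhds hx] with y hy
  rw [Gamma_add_one hy.ne', log_mul hy.ne' (Gamma_pos_of_pos hy).ne', add_comm, Pi.add_apply]

lemma digamma_add_nat {x : ℝ} (hx : 0 < x) (n : ℕ) :
    digamma (x + n) = digamma x + ∑ m ∈ range n, (x + m)⁻¹ := by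
  induction n with
  | zero => simp
  | succ n ih =>
    rw [Nat.cast_succ, ← add_assoc, digamma_add_one (by positivity), ih, sum_range_succ, add_assoc]

lemma monotoneOn_digamma : MonotoneOn digamma (Set.Ioi 0) :=
  convexOn_log_Gamma.monotoneOn_deriv fun _ hx => differentiableAt_log_Gamma hx

lemma tendsto_digamma_add_nat_sub_digamma_nat_add_one {x : ℝ} (hx₀ : 0 < x) (hx₁ : x ≤ 1) :
    Tendsto (fun n : ℕ => digamma (x + n) - digamma (n + 1)) atTop (𝓝 0) := by
  have h_bounds : ∀ n : ℕ, 1 ≤ n →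
      -(n : ℝ)⁻¹ ≤ digamma (x + n) - digamma (n + 1) ∧ digamma (x + n) - digamma (n + 1) ≤ 0 := by
    intro n hn
    have hn₀ : (0 : ℝ) < n := by exact_mod_cast hn
    have h_step : digamma (n + 1) = digamma n + (n : ℝ)⁻¹ := digamma_add_one hn₀
    have h_lower : digamma n ≤ digamma (x + n) :=
      monotoneOn_digamma hn₀ (by simp only [Set.mem_Ioi]; positivity) (by linarith)
    have h_upper : digamma (x + n) ≤ digamma (n + 1) :=
      monotoneOn_digamma (by simp only [Set.mem_Ioi]; positivity)
        (by simp only [Set.mem_Ioi]; positivity) (by linarith)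
    constructor <;> linarith
  have h_lower : Tendsto (fun n : ℕ => -(n : ℝ)⁻¹) atTop (𝓝 0) := by
    simpa using (tendsto_inv_atTop_nhds_zero_nat (𝕜 := ℝ)).neg
  refine tendsto_of_tendsto_of_tendsto_of_le_of_le' h_lower tendsto_const_nhds ?_ ?_
  · filter_upwards [eventually_ge_atTop 1] with n hn using (h_bounds n hn).1
  · filter_upwards [eventually_ge_atTop 1] with n hn using (h_bounds n hn).2

lemma harmonic_eq_sum_range_one_add_inv (n : ℕ) :
    (harmonic n : ℝ) = ∑ m ∈ range n, (1 + (m : ℝ))⁻¹ := by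
  simp [harmonic, add_comm]

lemma tendsto_sum_range_inv_add_sub_harmonic {x : ℝ} (hx₀ : 0 < x) (hx₁ : x ≤ 1) :
    Tendsto (fun n : ℕ => ∑ m ∈ range n, (x + m)⁻¹ - harmonic n) atTop
      (𝓝 (digamma 1 - digamma x)) := by
  have h := (tendsto_digamma_add_nat_sub_digamma_nat_add_one hx₀ hx₁).add_const
    (digamma 1 - digamma x)
  rw [zero_add] at h
  refine h.congr fun n => ?_
  rw [harmonic_eq_sum_range_one_add_inv, add_comm (n : ℝ) 1, digamma_add_nat hx₀,
    digamma_add_nat one_pos]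
  ring

lemma sum_Icc_one_eq_sum_range {M : Type*} [AddCommMonoid M] (f : ℕ → M) (N : ℕ) :
    ∑ r ∈ Icc 1 N, f r = ∑ i ∈ range N, f (i + 1) := by
  rw [← Ico_add_one_right_eq_Icc, sum_Ico_eq_sum_range, Nat.add_sub_cancel]
  simp only [add_comm 1]

lemma sum_Icc_sum_range_inv_div_add {N : ℕ} (hN : N ≠ 0) (n : ℕ) :
    ∑ r ∈ Icc 1 N, ∑ m ∈ range n, ((r : ℝ) / N + m)⁻¹ = N * harmonic (n * N) := by
  have hN' : (N : ℝ) ≠ 0 := Nat.cast_ne_zero.mpr hN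
  induction n with
  | zero => simp
  | succ n ih =>
    have h_block : ∑ r ∈ Icc 1 N, ((r : ℝ) / N + n)⁻¹
        = N * ∑ i ∈ range N, (((n * N + i + 1 : ℕ) : ℝ))⁻¹ := by
      rw [sum_Icc_one_eq_sum_range, mul_sum]
      refine sum_congr rfl fun i _ => ?_
      push_cast
      field_simp
      ring
    simp only [sum_range_succ, sum_add_distrib, ih, h_block, add_mul, one_mul, harmonic,
      sum_range_add, Rat.cast_add, Rat.cast_sum, Rat.cast_inv, Rat.cast_natCast, mul_add]

lemma tendsto_harmonic_mul_sub_harmonic {c : ℕ} (hc : c ≠ 0) :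
    Tendsto (fun n : ℕ => (harmonic (n * c) : ℝ) - harmonic n) atTop (𝓝 (log c)) := by
  have h_mul : Tendsto (fun n : ℕ => n * c) atTop atTop :=
    tendsto_id.atTop_mul_const' (Nat.pos_of_ne_zero hc)
  have h := ((tendsto_harmonic_sub_log.comp h_mul).sub tendsto_harmonic_sub_log).add_const (log c)
  rw [sub_self, zero_add] at h
  refine h.congr' ?_
  filter_upwards [eventually_ne_atTop 0] with n hn
  simp only [Function.comp_apply, Nat.cast_mul]
  rw [log_mul (Nat.cast_ne_zero.mpr hn) (Nat.cast_ne_zero.mpr hc)]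
  ring

lemma sum_Icc_digamma_div (N : ℕ) :
    ∑ r ∈ Icc 1 N, (digamma 1 - digamma ((r : ℝ) / N)) = N * log N := by
  rcases eq_or_ne N 0 with rfl | hN
  · simp
  have hN₀ : (0 : ℝ) < N := by positivity
  have h_terms : Tendsto (fun n : ℕ => ∑ r ∈ Icc 1 N, (∑ m ∈ range n, ((r : ℝ) / N + m)⁻¹
      - harmonic n)) atTop (𝓝 (∑ r ∈ Icc 1 N, (digamma 1 - digamma ((r : ℝ) / N)))) := by
    refine tendsto_finsetSum _ fun r hr => ?_
    obtain ⟨hr₁, hrN⟩ := mem_Icc.mp hr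
    exact tendsto_sum_range_inv_add_sub_harmonic (by positivity)
      ((div_le_one hN₀).mpr (by exact_mod_cast hrN))
  have h_eq : ∀ n : ℕ, ∑ r ∈ Icc 1 N, (∑ m ∈ range n, ((r : ℝ) / N + m)⁻¹ - harmonic n)
      = N * ((harmonic (n * N) : ℝ) - harmonic n) := by
    intro n
    rw [sum_sub_distrib, sum_Icc_sum_range_inv_div_add hN, sum_const, Nat.card_Icc,
      Nat.add_sub_cancel, nsmul_eq_mul, mul_sub]
  refine tendsto_nhds_unique h_terms ?_
  simpa only [h_eq] using (tendsto_harmonic_mul_sub_harmonic hN).const_mul (N : ℝ)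

/-- In lowest terms, `r / N` with `1 ≤ r ≤ N` is `a / d` for a unique divisor `d ∣ N` and
totative `a` of `d`. -/
lemma sum_Icc_div_eq_sum_divisors_sum_totSet {M : Type*} [AddCommMonoid M] (f : ℝ → M) (N : ℕ) :
    ∑ r ∈ Icc 1 N, f ((r : ℝ) / N) = ∑ d ∈ N.divisors, ∑ a ∈ totSet d, f ((a : ℝ) / d) := by
  rcases eq_or_ne N 0 with rfl | hN
  · simp
  rw [sum_sigma']
  refine sum_bij' (fun r _ => ⟨N / r.gcd N, r / r.gcd N⟩) (fun x _ => x.2 * (N / x.1))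
    ?_ ?_ ?_ ?_ ?_
  · intro r hr
    obtain ⟨hr₁, hrN⟩ := mem_Icc.mp hr
    have hg : 0 < r.gcd N := Nat.gcd_pos_of_pos_left N hr₁
    simp only [mem_sigma, Nat.mem_divisors, totSet, mem_filter, mem_Icc]
    refine ⟨⟨Nat.div_dvd_of_dvd (Nat.gcd_dvd_right r N), hN⟩,
      ⟨Nat.div_pos (Nat.gcd_le_left N hr₁) hg, Nat.div_le_div_right hrN⟩,
      Nat.coprime_div_gcd_div_gcd hg⟩
  · rintro ⟨d, a⟩ hx
    simp only [mem_sigma, Nat.mem_divisors, totSet, mem_filter, mem_Icc] at hx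
    obtain ⟨⟨⟨e, rfl⟩, -⟩, ⟨ha₁, had⟩, -⟩ := hx
    have hd : 0 < d := Nat.pos_of_ne_zero (left_ne_zero_of_mul hN)
    simp only [mem_Icc, Nat.mul_div_cancel_left e hd]
    exact ⟨Nat.one_le_iff_ne_zero.mpr (mul_ne_zero (by omega) (right_ne_zero_of_mul hN)),
      Nat.mul_le_mul_right e had⟩
  · intro r hr
    simp only
    rw [Nat.div_div_self (Nat.gcd_dvd_right r N) hN, Nat.div_mul_cancel (Nat.gcd_dvd_left r N)]
  · rintro ⟨d, a⟩ hx
    simp only [mem_sigma, Nat.mem_divisors, totSet, mem_filter, mem_Icc] at hx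
    obtain ⟨⟨⟨e, rfl⟩, -⟩, -, hcop⟩ := hx
    have hd : 0 < d := Nat.pos_of_ne_zero (left_ne_zero_of_mul hN)
    have he : 0 < e := Nat.pos_of_ne_zero (right_ne_zero_of_mul hN)
    have hgcd : (a * e).gcd (d * e) = e := by rw [Nat.gcd_mul_right, hcop, one_mul]
    simp only [Nat.mul_div_cancel_left e hd, hgcd, Nat.mul_div_cancel _ he]
  · intro r hr
    have hg : (r.gcd N : ℝ) ≠ 0 := by
      exact_mod_cast (Nat.gcd_pos_of_pos_left N (mem_Icc.mp hr).1).ne'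
    simp only
    rw [Nat.cast_div (Nat.gcd_dvd_left r N) hg, Nat.cast_div (Nat.gcd_dvd_right r N) hg,
      div_div_div_cancel_right₀ hg]

noncomputable def totSetDigammaSum (N : ℕ) : ℝ :=
  ∑ r ∈ totSet N, (digamma 1 - digamma ((r : ℝ) / N))

lemma sum_divisors_totSetDigammaSum (N : ℕ) :
    ∑ d ∈ N.divisors, totSetDigammaSum d = N * log N := by
  rw [← sum_Icc_digamma_div, sum_Icc_div_eq_sum_divisors_sum_totSet (digamma 1 - digamma ·)]
  rfl

lemma totSetDigammaSum_eq_sum_moebius {N : ℕ} (hN : 0 < N) :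
    totSetDigammaSum N = ∑ x ∈ N.divisorsAntidiagonal, (μ x.1 : ℝ) * (x.2 * log x.2) :=
  (ArithmeticFunction.sum_eq_iff_sum_mul_moebius_eq.mp
    (fun n _ => sum_divisors_totSetDigammaSum n) N hN).symm

lemma sum_divisors_moebius_div (N : ℕ) :
    ∑ d ∈ N.divisors, (μ d : ℝ) / d = N.totient / N := by
  rcases eq_or_ne N 0 with rfl | hN
  · simp
  have h_inv := ArithmeticFunction.sum_eq_iff_sum_mul_moebius_eq
    (f := fun n => (n.totient : ℝ)) (g := fun n => (n : ℝ)).mp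
    (fun n _ => by exact_mod_cast Nat.sum_totient n) N (Nat.pos_of_ne_zero hN)
  rw [Nat.sum_divisorsAntidiagonal (fun d e => (μ d : ℝ) * e)] at h_inv
  rw [← h_inv, sum_div]
  refine sum_congr rfl fun d hd => ?_
  rw [Nat.cast_div (Nat.dvd_of_mem_divisors hd)
    (by exact_mod_cast (Nat.pos_of_mem_divisors hd).ne')]
  field_simp

lemma sum_divisors_filter_dvd_moebius_div {N p : ℕ} (hN : N ≠ 0) (hp : p.Prime) (hpN : p ∣ N) :
    ∑ d ∈ N.divisors with p ∣ d, (μ d : ℝ) / d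
      = -(p : ℝ)⁻¹ * ∑ d ∈ N.divisors with ¬p ∣ d, (μ d : ℝ) / d := by
  have h_pair : ∀ d, ¬p ∣ d → (μ (p * d) : ℝ) / (p * d : ℕ) = -(p : ℝ)⁻¹ * ((μ d : ℝ) / d) := by
    intro d hd
    rw [ArithmeticFunction.isMultiplicative_moebius.map_mul_of_coprime
      ((Nat.Prime.coprime_iff_not_dvd hp).mpr hd), ArithmeticFunction.moebius_apply_prime hp]
    push_cast
    ring
  rw [mul_sum, ← sum_congr rfl fun d hd => h_pair d (mem_filter.mp hd).2,
    ← sum_image (f := fun e => (μ e : ℝ) / e) fun _ _ _ _ h => Nat.eq_of_mul_eq_mul_left hp.pos h]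
  -- the divisors `e` of `N` missed by `d ↦ p * d` are divisible by `p ^ 2`, so `μ e = 0`
  refine (sum_subset ?_ fun e he he' => ?_).symm
  · intro e he
    obtain ⟨d, hd, rfl⟩ := mem_image.mp he
    obtain ⟨hdN, hpd⟩ := mem_filter.mp hd
    simp only [mem_filter, Nat.mem_divisors, dvd_mul_right, and_true] at hdN ⊢
    exact ⟨Nat.Coprime.mul_dvd_of_dvd_of_dvd ((Nat.Prime.coprime_iff_not_dvd hp).mpr hpd)
      hpN hdN.1, hN⟩
  · obtain ⟨heN, d, rfl⟩ := mem_filter.mp he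
    have hpd : p ∣ d := by
      by_contra hpd
      exact he' (mem_image.mpr ⟨d, mem_filter.mpr ⟨Nat.mem_divisors.mpr
        ⟨(Nat.dvd_mul_left d p).trans (Nat.dvd_of_mem_divisors heN), hN⟩, hpd⟩, rfl⟩)
    rw [ArithmeticFunction.moebius_eq_zero_of_not_squarefree, Int.cast_zero, zero_div]
    rintro hsq
    exact hp.one_lt.ne' (Nat.isUnit_iff.mp (hsq p (mul_dvd_mul_left p hpd)))

lemma sum_divisors_filter_dvd_moebius_div_eq_totient {N p : ℕ} (hN : N ≠ 0) (hp : p.Prime)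
    (hpN : p ∣ N) :
    ∑ d ∈ N.divisors with p ∣ d, (μ d : ℝ) / d = -(N.totient / N) / (p - 1) := by
  have h_split := sum_filter_add_sum_filter_not N.divisors (p ∣ ·) fun d => (μ d : ℝ) / d
  rw [sum_divisors_moebius_div] at h_split
  have h_pair := sum_divisors_filter_dvd_moebius_div hN hp hpN
  have hp₁ : (1 : ℝ) < p := by exact_mod_cast hp.one_lt
  rw [eq_div_iff (by linarith)]
  field_simp at h_pair
  linear_combination h_pair - h_split

lemma moebius_mul_log_eq_sum_primeFactors {N d : ℕ} (hN : N ≠ 0) (hd : d ∣ N) :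
    (μ d : ℝ) * log d = ∑ p ∈ N.primeFactors with p ∣ d, (μ d : ℝ) * log p := by
  by_cases hsq : Squarefree d
  · have h_log : log d = ∑ p ∈ d.primeFactors, log p := by
      conv_lhs => rw [← Nat.prod_primeFactors_of_squarefree hsq]
      rw [Nat.cast_prod, log_prod fun p hp => by
        exact_mod_cast (Nat.prime_of_mem_primeFactors hp).ne_zero]
    rw [← mul_sum, Nat.primeFactors_filter_dvd_of_dvd hN hd, h_log]
  · simp [ArithmeticFunction.moebius_eq_zero_of_not_squarefree hsq]

lemma sum_divisors_moebius_mul_log_div {N : ℕ} (hN : N ≠ 0) :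
    ∑ d ∈ N.divisors, (μ d : ℝ) * log d / d
      = -(N.totient / N) * ∑ p ∈ N.primeFactors, log p / (p - 1) := by
  calc ∑ d ∈ N.divisors, (μ d : ℝ) * log d / d
      = ∑ d ∈ N.divisors, ∑ p ∈ N.primeFactors with p ∣ d, (μ d : ℝ) / d * log p := by
        refine sum_congr rfl fun d hd => ?_
        rw [moebius_mul_log_eq_sum_primeFactors hN (Nat.dvd_of_mem_divisors hd), sum_div]
        exact sum_congr rfl fun p _ => by ring
    _ = ∑ p ∈ N.primeFactors, (∑ d ∈ N.divisors with p ∣ d, (μ d : ℝ) / d) * log p := by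
        simp_rw [sum_mul]
        refine sum_comm' fun d p => ?_
        simp only [mem_filter, Nat.mem_divisors, Nat.mem_primeFactors]
        constructor
        · rintro ⟨⟨hdN, -⟩, ⟨hp, hpN, -⟩, hpd⟩
          exact ⟨⟨⟨hdN, hN⟩, hpd⟩, hp, hpN, hN⟩
        · rintro ⟨⟨⟨hdN, -⟩, hpd⟩, hp, hpN, -⟩
          exact ⟨⟨hdN, hN⟩, ⟨hp, hpN, hN⟩, hpd⟩
    _ = -(N.totient / N) * ∑ p ∈ N.primeFactors, log p / (p - 1) := by
        rw [mul_sum]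
        refine sum_congr rfl fun p hp => ?_
        rw [sum_divisors_filter_dvd_moebius_div_eq_totient hN (Nat.prime_of_mem_primeFactors hp)
          (Nat.dvd_of_mem_primeFactors hp)]
        ring

lemma cast_totient_div_sub_one {N p : ℕ} (hp : p.Prime) (hpN : p ∣ N) :
    ((N.totient / (p - 1) : ℕ) : ℝ) = N.totient / ((p : ℝ) - 1) := by
  have h_dvd : p - 1 ∣ N.totient := Nat.totient_prime hp ▸ Nat.totient_dvd_of_dvd hpN
  rw [Nat.cast_div h_dvd, Nat.cast_pred hp.pos]
  exact_mod_cast (Nat.sub_pos_of_lt hp.one_lt).ne'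

lemma paperC_pos (N : ℕ) : 0 < paperC N := by
  rcases eq_or_ne N 0 with rfl | hN
  · simp [paperC]
  exact Nat.mul_pos (Nat.pow_pos (Nat.pos_of_ne_zero hN))
    (prod_pos fun p hp => Nat.pow_pos (Nat.pos_of_mem_primeFactors hp))

lemma log_paperC {N : ℕ} (hN : N ≠ 0) :
    log (paperC N)
      = N.totient * log N + ∑ p ∈ N.primeFactors, N.totient / ((p : ℝ) - 1) * log p := by
  have h_factors : ∀ p ∈ N.primeFactors, ((p ^ (N.totient / (p - 1)) : ℕ) : ℝ) ≠ 0 :=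
    fun p hp => by exact_mod_cast (Nat.pow_pos (Nat.pos_of_mem_primeFactors hp)).ne'
  rw [paperC, Nat.cast_mul, Nat.cast_prod, log_mul (by positivity) (prod_ne_zero_iff.mpr h_factors),
    Nat.cast_pow, log_pow, log_prod h_factors]
  congr 1
  refine sum_congr rfl fun p hp => ?_
  rw [Nat.cast_pow, log_pow, cast_totient_div_sub_one (Nat.prime_of_mem_primeFactors hp)
    (Nat.dvd_of_mem_primeFactors hp)]

lemma sum_moebius_mul_mul_log_eq_log_paperC {N : ℕ} (hN : N ≠ 0) :
    ∑ x ∈ N.divisorsAntidiagonal, (μ x.1 : ℝ) * (x.2 * log x.2) = log (paperC N) := by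
  have hN' : (N : ℝ) ≠ 0 := Nat.cast_ne_zero.mpr hN
  have h_term : ∀ d ∈ N.divisors, (μ d : ℝ) * ((N / d : ℕ) * log (N / d : ℕ))
      = N * log N * ((μ d : ℝ) / d) - N * ((μ d : ℝ) * log d / d) := by
    intro d hd
    have hd₀ : (d : ℝ) ≠ 0 := by exact_mod_cast (Nat.pos_of_mem_divisors hd).ne'
    rw [Nat.cast_div (Nat.dvd_of_mem_divisors hd) hd₀, log_div hN' hd₀]
    field_simp
  rw [Nat.sum_divisorsAntidiagonal (fun d e => (μ d : ℝ) * (e * log e)), sum_congr rfl h_term,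
    sum_sub_distrib, ← mul_sum, ← mul_sum, sum_divisors_moebius_div,
    sum_divisors_moebius_mul_log_div hN, log_paperC hN]
  have h_sum : ∑ p ∈ N.primeFactors, N.totient / ((p : ℝ) - 1) * log p
      = N.totient * ∑ p ∈ N.primeFactors, log p / ((p : ℝ) - 1) := by
    rw [mul_sum]
    exact sum_congr rfl fun p _ => by ring
  rw [h_sum]
  field_simp
  ring

lemma totSetDigammaSum_eq_log_paperC (N : ℕ) : totSetDigammaSum N = log (paperC N) := by
  rcases eq_or_ne N 0 with rfl | hN
  · simp [totSetDigammaSum, totSet, paperC]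
  rw [totSetDigammaSum_eq_sum_moebius (Nat.pos_of_ne_zero hN),
    sum_moebius_mul_mul_log_eq_log_paperC hN]

theorem digamma_sum_eq_logC_general {k : ℕ} (N : Fin k → ℕ) :
    ∑ j : Fin k, ∑ r ∈ totSet (N j), (digamma 1 - digamma ((r : ℝ) / (N j)))
      = Real.log (∏ j : Fin k, (paperC (N j) : ℝ)) := by
  rw [log_prod fun j _ => by exact_mod_cast (paperC_pos (N j)).ne']
  exact sum_congr rfl fun j _ => totSetDigammaSum_eq_log_paperC (N j)

/-- For `N_1, …, N_k ≥ 2`,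
`∑_j ∑_i (ψ(1) − ψ(r_{i,j}/N_j)) = log C_N` where `C_N = ∏_j C_{N_j}`. -/
theorem digamma_sum_eq_logC {k : ℕ} (N : Fin k → ℕ) (hN : ∀ j, 2 ≤ N j) :
    ∑ j : Fin k, ∑ r ∈ totSet (N j), (digamma 1 - digamma ((r : ℝ) / (N j)))
      = Real.log (∏ j : Fin k, (paperC (N j) : ℝ)) :=
  digamma_sum_eq_logC_general N
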